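/- Let K, N ≥ 1 with K ≡ 1 (mod 3). If N ≡ 1 (mod 3), then the alternating number of independent sets of the parallelogram 𝓟(K,N) is Z_𝓟(K,N) = 0; otherwise, setting n = ⌈N/3⌉, Z_𝓟(K,N) = (−1)ⁿ. -/

import Mathlib

/-- Two vertices of the grid `ℤ²` are adjacent iff they are at distance 1. -/
def GridAdj (p q : ℤ × ℤ) : Prop := |p.1 - q.1| + |p.2 - q.2| = 1

instance : DecidableRel GridAdj := fun p q => by unfold GridAdj; infer_instance

/-- The alternating number of independent sets of the subgraph of `ℤ²`
induced by the finite vertex set `V`: `Z = Σ_I (-1)^|I|` over independent sets `I ⊆ V`. -/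
def altZ (V : Finset (ℤ × ℤ)) : ℤ :=
  ∑ I ∈ V.powerset.filter (fun I => ∀ p ∈ I, ∀ q ∈ I, ¬ GridAdj p q),
    (-1 : ℤ) ^ I.card

/-- The parallelogram `𝓟(K,N)`: points `(x,y)` with `0 ≤ y ≤ K-1` and
`-y ≤ x ≤ -y+N-1` (cut out of a bounding box that contains all such points). -/
noncomputable def paralP (K N : ℕ) : Finset (ℤ × ℤ) :=
  ((Finset.Icc (-(K + N : ℤ)) (K + N)) ×ˢ (Finset.Icc (-(K + N : ℤ)) (K + N))).filter
    (fun p => 0 ≤ p.2 ∧ p.2 ≤ K - 1 ∧ -p.2 ≤ p.1 ∧ p.1 ≤ -p.2 + N - 1)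

open Finset

/-- Compatibility of two consecutive columns: `A` left, `B` right. -/
def Comp (A B : Finset ℕ) : Prop := (∀ y ∈ B, y ∉ A) ∧ ∀ y ∈ A, y + 1 ∉ B

instance : ∀ A B, Decidable (Comp A B) := fun A B => by unfold Comp; infer_instance

/-- Transfer vector: signed count of column sequences of length `n` ending in `B`. -/
def Fv (K : ℕ) : ℕ → Finset ℕ → ℤ
  | 0, B => if B = ∅ then 1 else 0
  | n+1, B => (-1) ^ B.card *
      ∑ A ∈ (range K).powerset.filter (fun A => Comp A B), Fv K n A

def NoConsec (C : Finset ℕ) : Prop := ∀ y ∈ C, y + 1 ∉ C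
instance : DecidablePred NoConsec := fun C => by unfold NoConsec; infer_instance

def pathZ (m : ℕ) : ℤ := ∑ C ∈ (range m).powerset.filter NoConsec, (-1) ^ C.card
def Qz (m : ℕ) : ℤ :=
  ∑ C ∈ (range m).powerset.filter (fun C => NoConsec C ∧ 0 ∈ C), (-1) ^ C.card

lemma pathZ_zero : pathZ 0 = 1 := by decide
lemma Qz_zero : Qz 0 = 0 := by decide
lemma pathZ_one : pathZ 1 = 0 := by decide
lemma pathZ_two : pathZ 2 = -1 := by decide

lemma top_split (m : ℕ) (P : Finset ℕ → Prop) [DecidablePred P]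
    (hP : ∀ C, P (insert (m+1) C) ↔ P C) :
    ∑ C ∈ (range (m+2)).powerset.filter (fun C => NoConsec C ∧ P C), (-1:ℤ)^C.card
    = ∑ C ∈ (range (m+1)).powerset.filter (fun C => NoConsec C ∧ P C), (-1:ℤ)^C.card
    - ∑ C ∈ (range m).powerset.filter (fun C => NoConsec C ∧ P C), (-1:ℤ)^C.card := by
  rw [← sum_filter_add_sum_filter_not
    ((range (m+2)).powerset.filter (fun C => NoConsec C ∧ P C)) (fun C => m+1 ∈ C)]
  have h1 : ((range (m+2)).powerset.filter (fun C => NoConsec C ∧ P C)).filter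
      (fun C => m+1 ∉ C) = (range (m+1)).powerset.filter (fun C => NoConsec C ∧ P C) := by
    ext C
    simp only [mem_filter, mem_powerset]
    constructor
    · rintro ⟨⟨hsub, h⟩, hm⟩
      refine ⟨fun x hx => ?_, h⟩
      have := hsub hx
      simp only [mem_range] at *
      rcases Nat.lt_succ_iff_lt_or_eq.mp this with h' | h'
      · exact h'
      · exact absurd (h' ▸ hx) hm
    · rintro ⟨hsub, h⟩
      have hm : m + 1 ∉ C := fun hx => by simpa using hsub hx
      exact ⟨⟨hsub.trans (by intro x; simp only [mem_range]; omega), h⟩, hm⟩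
  have h2 : ∑ C ∈ ((range (m+2)).powerset.filter (fun C => NoConsec C ∧ P C)).filter
      (fun C => m+1 ∈ C), (-1:ℤ)^C.card
      = - ∑ C ∈ (range m).powerset.filter (fun C => NoConsec C ∧ P C), (-1:ℤ)^C.card := by
    rw [← Finset.sum_neg_distrib]
    refine Finset.sum_nbij' (fun C => C.erase (m+1)) (fun C => insert (m+1) C)
      ?_ ?_ ?_ ?_ ?_
    · intro C hC
      simp only [mem_filter, mem_powerset] at hC
      obtain ⟨⟨hsub, hnc, hp⟩, hm⟩ := hC
      simp only [mem_filter, mem_powerset]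
      refine ⟨fun x hx => ?_, fun y hy => ?_, ?_⟩
      · simp only [mem_erase, mem_range] at hx ⊢
        obtain ⟨hne, hxC⟩ := hx
        have hx2 := hsub hxC
        simp only [mem_range] at hx2
        -- x < m+2, x ≠ m+1, and x ≠ m since x = m with m+1 ∈ C violates NoConsec
        have : x ≠ m := by
          rintro rfl
          exact hnc x hxC hm
        omega
      · simp only [mem_erase] at hy ⊢
        intro ⟨_, hc⟩
        exact hnc y hy.2 hc
      · rw [← hP]
        rwa [Finset.insert_erase hm]
    · intro C hC
      simp only [mem_filter, mem_powerset] at hC ⊢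
      obtain ⟨hsub, hnc, hp⟩ := hC
      have hmC : m + 1 ∉ C := fun h => by simpa using Nat.lt_irrefl m (by
        have := hsub h; simp only [mem_range] at this; omega)
      refine ⟨⟨?_, ?_, (hP C).mpr hp⟩, mem_insert_self _ _⟩
      · intro x hx
        simp only [mem_insert] at hx
        rcases hx with rfl | hx
        · simp [mem_range]
        · have := hsub hx; simp only [mem_range] at this ⊢; omega
      · intro y hy
        simp only [mem_insert] at hy ⊢
        rintro (h | h)
        · rcases hy with rfl | hy
          · omega
          · have := hsub hy; simp only [mem_range] at this; omega
        · rcases hy with rfl | hy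
          · have := hsub h; simp only [mem_range] at this; omega
          · exact hnc y hy h
    · intro C hC
      simp only [mem_filter] at hC
      exact Finset.insert_erase hC.2
    · intro C hC
      simp only [mem_filter, mem_powerset] at hC
      have hmC : m + 1 ∉ C := fun h => by
        have := hC.1 h; simp only [mem_range] at this; omega
      exact Finset.erase_insert hmC
    · intro C hC
      simp only [mem_filter] at hC
      rw [Finset.card_erase_of_mem hC.2]
      have : C.card ≠ 0 := Finset.card_ne_zero_of_mem hC.2
      have h1 : C.card - 1 + 1 = C.card := by omega
      have := pow_succ (-1 : ℤ) (C.card - 1)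
      rw [h1] at this
      rw [this]; ring
  rw [h1, h2]; ring

lemma pathZ_rec (m : ℕ) : pathZ (m+2) = pathZ (m+1) - pathZ m := by
  unfold pathZ
  have := top_split m (fun _ => True) (by intro C; simp)
  simpa using this

lemma Qz_rec (m : ℕ) : Qz (m+2) = Qz (m+1) - Qz m := by
  unfold Qz
  exact top_split m (fun C => 0 ∈ C) (by intro C; simp)

lemma pathZ_three (j : ℕ) : pathZ (3*j) = (-1)^j := by
  induction j with
  | zero => simpa using pathZ_zero
  | succ j ih =>
    have h3 : 3*(j+1) = (3*j+1)+2 := by ring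
    have h2 : 3*j+2 = (3*j)+2 := rfl
    rw [h3, pathZ_rec, show 3*j+1+1 = 3*j+2 from rfl, h2, pathZ_rec, ih]
    ring

lemma Qz_three (j : ℕ) : Qz (3*j) = 0 := by
  induction j with
  | zero => simpa using Qz_zero
  | succ j ih =>
    have h3 : 3*(j+1) = (3*j+1)+2 := by ring
    rw [h3, Qz_rec, show 3*j+1+1 = 3*j+2 from rfl, show 3*j+2 = (3*j)+2 from rfl,
      Qz_rec, ih]
    ring

lemma Comp_empty_left (B : Finset ℕ) : Comp ∅ B := ⟨fun y _ => by simp, fun y h => by simp at h⟩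

lemma Fv_one (K : ℕ) (B : Finset ℕ) : Fv K 1 B = (-1)^B.card := by
  show (-1:ℤ)^B.card * ∑ A ∈ (range K).powerset.filter (fun A => Comp A B),
      (if A = ∅ then (1:ℤ) else 0) = (-1)^B.card
  rw [Finset.sum_ite_eq' _ (∅ : Finset ℕ) (fun _ => (1:ℤ))]
  have : (∅ : Finset ℕ) ∈ (range K).powerset.filter (fun A => Comp A B) := by
    simp [Comp_empty_left]
  rw [if_pos this, mul_one]

def Cover (K : ℕ) (B : Finset ℕ) : Prop := ∀ y, y < K → y ∈ B ∨ y + 1 ∈ B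
instance : ∀ K B, Decidable (Cover K B) := fun K B => by unfold Cover; infer_instance

lemma Fv_two (K : ℕ) (B : Finset ℕ) :
    Fv K 2 B = if Cover K B then (-1)^B.card else 0 := by
  show (-1:ℤ)^B.card * ∑ A ∈ (range K).powerset.filter (fun A => Comp A B), Fv K 1 A = _
  have hsum : ∑ A ∈ (range K).powerset.filter (fun A => Comp A B), Fv K 1 A
      = ∑ A ∈ ((range K).filter (fun y => y ∉ B ∧ y + 1 ∉ B)).powerset, (-1:ℤ)^A.card := by
    apply Finset.sum_congr _ (fun A _ => Fv_one K A)
    ext A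
    rw [mem_filter, mem_powerset, mem_powerset]; simp only [Comp, Finset.subset_iff, mem_filter]
    constructor
    · rintro ⟨hsub, h1, h2⟩ y hy
      exact ⟨hsub hy, fun hB => h1 y hB hy, h2 y hy⟩
    · intro h
      refine ⟨fun y hy => (h hy).1, fun y hy hyA => (h hyA).2.1 hy, fun y hy => (h hy).2.2⟩
  rw [hsum, Finset.sum_powerset_neg_one_pow_card]
  have hiff : ((range K).filter (fun y => y ∉ B ∧ y + 1 ∉ B) = ∅) ↔ Cover K B := by
    rw [Finset.filter_eq_empty_iff]
    constructor
    · intro h y hy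
      have := h (Finset.mem_range.mpr hy)
      by_contra hc
      push_neg at hc
      exact this ⟨hc.1, hc.2⟩
    · intro h y hy
      simp only [not_and, not_not]
      intro h1
      rcases h y (Finset.mem_range.mp hy) with h2 | h2
      · exact absurd h2 h1
      · exact h2
  by_cases hc : Cover K B
  · rw [if_pos (hiff.mpr hc), if_pos hc, mul_one]
  · rw [if_neg (fun he => hc (hiff.mp he)), if_neg hc, mul_zero]

lemma neg_one_pow_compl (K a : ℕ) (ha : a ≤ K) :
    ((-1:ℤ))^a = (-1)^K * (-1)^(K - a) := by
  have h : K - a + (K - a) + a = K + (K - a) := by omega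
  have : ((-1:ℤ))^(K - a + (K - a) + a) = (-1)^(K + (K-a)) := by rw [h]
  rw [pow_add, pow_add, pow_add, ← pow_add] at this
  have he : ((-1:ℤ))^(K - a + (K - a)) = 1 := Even.neg_one_pow ⟨K - a, rfl⟩
  rw [he, one_mul] at this
  rw [this]

lemma Fv_three (K : ℕ) (B : Finset ℕ) (hB : B ⊆ range K) :
    Fv K 3 B = (-1)^(B.card + K) *
      ∑ C ∈ (range K).powerset.filter (fun C => NoConsec C ∧ (∀ y ∈ C, y + 1 < K) ∧
        (∀ y ∈ B, y ∈ C ∧ (1 ≤ y → y - 1 ∈ C))), (-1:ℤ)^C.card := by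
  show (-1:ℤ)^B.card * ∑ A ∈ (range K).powerset.filter (fun A => Comp A B), Fv K 2 A = _
  have hsum : ∑ A ∈ (range K).powerset.filter (fun A => Comp A B), Fv K 2 A
      = ∑ A ∈ ((range K).powerset.filter (fun A => Comp A B)).filter (fun A => Cover K A),
          (-1:ℤ)^A.card :=
    calc ∑ A ∈ (range K).powerset.filter (fun A => Comp A B), Fv K 2 A
        = ∑ A ∈ (range K).powerset.filter (fun A => Comp A B),
            (if Cover K A then (-1:ℤ)^A.card else 0) :=
          Finset.sum_congr rfl (fun A _ => Fv_two K A)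
      _ = _ := (Finset.sum_filter _ _).symm
  rw [hsum]
  have hbij : ∑ A ∈ ((range K).powerset.filter (fun A => Comp A B)).filter (fun A => Cover K A),
      (-1:ℤ)^A.card
      = (-1)^K * ∑ C ∈ (range K).powerset.filter (fun C => NoConsec C ∧ (∀ y ∈ C, y + 1 < K) ∧
        (∀ y ∈ B, y ∈ C ∧ (1 ≤ y → y - 1 ∈ C))), (-1:ℤ)^C.card := by
    rw [Finset.mul_sum]
    refine Finset.sum_nbij' (fun A => range K \ A) (fun C => range K \ C) ?_ ?_ ?_ ?_ ?_
    · intro A hA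
      simp only [mem_filter, mem_powerset] at hA
      obtain ⟨⟨hsub, hc1, hc2⟩, hcov⟩ := hA
      simp only [mem_filter, mem_powerset]
      refine ⟨Finset.sdiff_subset, ?_, ?_, ?_⟩
      · intro y hy
        obtain ⟨hyr, hya⟩ := Finset.mem_sdiff.mp hy
        have hyK : y < K := Finset.mem_range.mp hyr
        intro hcon
        obtain ⟨_, h2⟩ := Finset.mem_sdiff.mp hcon
        rcases hcov y hyK with h | h
        · exact hya h
        · exact h2 h
      · intro y hy
        obtain ⟨hyr, hya⟩ := Finset.mem_sdiff.mp hy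
        have hyK : y < K := Finset.mem_range.mp hyr
        rcases hcov y hyK with h | h
        · exact absurd h hya
        · exact Finset.mem_range.mp (hsub h)
      · intro y hy
        have hyr : y ∈ range K := hB hy
        have hyK : y < K := Finset.mem_range.mp hyr
        refine ⟨Finset.mem_sdiff.mpr ⟨hyr, hc1 y hy⟩, fun h1 => ?_⟩
        refine Finset.mem_sdiff.mpr ⟨Finset.mem_range.mpr (by omega), fun hA => ?_⟩
        have hy1 : y - 1 + 1 = y := by omega
        exact hc2 (y-1) hA (by rwa [hy1])
    · intro C hC
      simp only [mem_filter, mem_powerset] at hC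
      obtain ⟨hsub, hnc, htop, hBC⟩ := hC
      simp only [mem_filter, mem_powerset]
      refine ⟨⟨Finset.sdiff_subset, ?_, ?_⟩, ?_⟩
      · intro y hy hcon
        exact (Finset.mem_sdiff.mp hcon).2 ((hBC y hy).1)
      · intro y hyA hy1
        have h0 : 1 ≤ y + 1 := by omega
        have := (hBC (y+1) hy1).2 (by omega)
        simp only [Nat.add_sub_cancel] at this
        exact (Finset.mem_sdiff.mp hyA).2 this
      · intro y hy
        by_cases hyC : y ∈ C
        · right
          have := htop y hyC
          exact Finset.mem_sdiff.mpr ⟨Finset.mem_range.mpr this, hnc y hyC⟩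
        · left
          exact Finset.mem_sdiff.mpr ⟨Finset.mem_range.mpr hy, hyC⟩
    · intro A hA
      simp only [mem_filter, mem_powerset] at hA
      exact Finset.sdiff_sdiff_eq_self hA.1.1
    · intro C hC
      simp only [mem_filter, mem_powerset] at hC
      exact Finset.sdiff_sdiff_eq_self hC.1
    · intro A hA
      simp only [mem_filter, mem_powerset] at hA
      have hsub := hA.1.1
      have hcard : (range K \ A).card = K - A.card := by
        rw [Finset.card_sdiff_of_subset hsub, Finset.card_range]
      rw [hcard]
      have haK : A.card ≤ K := by
        have := Finset.card_le_card hsub; simpa using this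
      rw [neg_one_pow_compl K A.card haK]
  rw [hbij, pow_add]
  ring

lemma Fv_three_ge_one (K : ℕ) (B : Finset ℕ) (hB : B ⊆ range K) {y : ℕ}
    (hy : y ∈ B) (hy1 : 1 ≤ y) : Fv K 3 B = 0 := by
  rw [Fv_three K B hB]
  have : (range K).powerset.filter (fun C => NoConsec C ∧ (∀ y ∈ C, y + 1 < K) ∧
      (∀ y ∈ B, y ∈ C ∧ (1 ≤ y → y - 1 ∈ C))) = ∅ := by
    rw [Finset.filter_eq_empty_iff]
    rintro C _ ⟨hnc, _, hBC⟩
    obtain ⟨hyC, hprev⟩ := hBC y hy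
    have h1 : y - 1 ∈ C := hprev hy1
    have h2 : y - 1 + 1 = y := by omega
    exact hnc (y-1) h1 (by rwa [h2])
  rw [this, Finset.sum_empty, mul_zero]

lemma Fv_three_empty (m : ℕ) : Fv (m+1) 3 ∅ = (-1)^(m+1) * pathZ m := by
  rw [Fv_three (m+1) ∅ (by simp)]
  have hset : (range (m+1)).powerset.filter (fun C => NoConsec C ∧ (∀ y ∈ C, y + 1 < m+1) ∧
      (∀ y ∈ (∅ : Finset ℕ), y ∈ C ∧ (1 ≤ y → y - 1 ∈ C)))
      = (range m).powerset.filter NoConsec := by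
    ext C
    simp only [mem_filter, mem_powerset, Finset.notMem_empty, Finset.subset_iff, mem_range]
    constructor
    · rintro ⟨hsub, hnc, htop, _⟩
      exact ⟨fun {x} hx => by have := htop x hx; omega, hnc⟩
    · rintro ⟨hsub, hnc⟩
      exact ⟨fun {x} hx => by have := hsub hx; omega, hnc,
        fun y hy => by have := hsub hy; omega, fun y hy => absurd hy (by simp)⟩
  rw [hset]
  simp [pathZ]

lemma Fv_three_singleton (m : ℕ) : Fv (m+1) 3 {0} = (-1)^(1+(m+1)) * Qz m := by
  rw [Fv_three (m+1) {0} (by simp)]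
  have hset : (range (m+1)).powerset.filter (fun C => NoConsec C ∧ (∀ y ∈ C, y + 1 < m+1) ∧
      (∀ y ∈ ({0} : Finset ℕ), y ∈ C ∧ (1 ≤ y → y - 1 ∈ C)))
      = (range m).powerset.filter (fun C => NoConsec C ∧ 0 ∈ C) := by
    ext C
    simp only [mem_filter, mem_powerset, Finset.mem_singleton, Finset.subset_iff, mem_range]
    constructor
    · rintro ⟨hsub, hnc, htop, h0⟩
      exact ⟨fun {x} hx => by have := htop x hx; omega, hnc, (h0 0 rfl).1⟩
    · rintro ⟨hsub, hnc, h0⟩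
      refine ⟨fun {x} hx => by have := hsub hx; omega, hnc,
        fun y hy => by have := hsub hy; omega, ?_⟩
      rintro y rfl
      exact ⟨h0, fun h => absurd h (by omega)⟩
  rw [hset]
  simp [Qz]

lemma Fv_four (K : ℕ) (hK3 : K % 3 = 1) (B : Finset ℕ) (hB : B ⊆ range K) :
    Fv K 4 B = -(-1)^B.card := by
  obtain ⟨j, rfl⟩ : ∃ j, K = 3*j+1 := ⟨K/3, by omega⟩
  set K := 3*j+1 with hK
  show (-1:ℤ)^B.card * ∑ A ∈ (range K).powerset.filter (fun A => Comp A B), Fv K 3 A = _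
  have hzero : ∀ A ∈ (range K).powerset.filter (fun A => Comp A B),
      A ∉ ((range K).powerset.filter (fun A => Comp A B)).filter (fun A => A ⊆ {0}) →
      Fv K 3 A = 0 := by
    intro A hA hA'
    simp only [mem_filter] at hA hA'
    have hns : ¬ A ⊆ {0} := fun h => hA' ⟨hA, h⟩
    obtain ⟨y, hyA, hy0⟩ := Finset.not_subset.mp hns
    simp only [Finset.mem_singleton] at hy0
    exact Fv_three_ge_one K A (Finset.mem_powerset.mp hA.1) hyA (by omega)
  rw [← Finset.sum_subset (Finset.filter_subset _ _) hzero]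
  have hQ : Fv K 3 {0} = 0 := by
    rw [show K = (3*j)+1 from rfl, Fv_three_singleton (3*j), Qz_three j, mul_zero]
  have hsum2 : ∑ A ∈ ((range K).powerset.filter (fun A => Comp A B)).filter (fun A => A ⊆ {0}),
      Fv K 3 A = ∑ A ∈ ((range K).powerset.filter (fun A => Comp A B)).filter (fun A => A ⊆ {0}),
      (if A = ∅ then Fv K 3 ∅ else 0) := by
    refine Finset.sum_congr rfl (fun A hA => ?_)
    simp only [mem_filter] at hA
    rcases Finset.subset_singleton_iff.mp hA.2 with rfl | rfl
    · simp
    · rw [hQ, if_neg (by simp)]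
  rw [hsum2, Finset.sum_ite_eq' _ (∅ : Finset ℕ) (fun _ => Fv K 3 ∅)]
  have hmem : (∅ : Finset ℕ) ∈ ((range K).powerset.filter (fun A => Comp A B)).filter
      (fun A => A ⊆ {0}) := by
    simp [Comp_empty_left]
  rw [if_pos hmem]
  rw [show K = (3*j)+1 from rfl, Fv_three_empty (3*j), pathZ_three j]
  have : ((-1:ℤ))^(3*j+1) * (-1)^j = -1 := by
    rw [pow_succ, pow_mul, show ((-1:ℤ))^3 = -1 by norm_num]
    have h1 : ((-1:ℤ))^j * (-1)^j = 1 := by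
      rw [← pow_add]; exact Even.neg_one_pow ⟨j, rfl⟩
    linear_combination -h1
  rw [this]
  ring


lemma Fv_period (K : ℕ) (hK3 : K % 3 = 1) :
    ∀ n, 1 ≤ n → ∀ B ⊆ range K, Fv K (n+3) B = -Fv K n B := by
  intro n
  induction n with
  | zero => omega
  | succ n ih =>
    intro _ B hB
    rcases Nat.eq_zero_or_pos n with rfl | hn
    · rw [Fv_four K hK3 B hB, Fv_one]
    · show (-1:ℤ)^B.card * ∑ A ∈ (range K).powerset.filter (fun A => Comp A B),
          Fv K (n+3) A = -((-1:ℤ)^B.card * ∑ A ∈ (range K).powerset.filter (fun A => Comp A B),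
          Fv K n A)
      rw [show ∑ A ∈ (range K).powerset.filter (fun A => Comp A B), Fv K (n+3) A
          = ∑ A ∈ (range K).powerset.filter (fun A => Comp A B), -Fv K n A from
        Finset.sum_congr rfl (fun A hA => ih hn A
          (Finset.mem_powerset.mp (Finset.mem_filter.mp hA).1))]
      rw [Finset.sum_neg_distrib]
      ring

lemma sum_Fv_eq (K N : ℕ) :
    ∑ B ∈ (range K).powerset, Fv K N B = Fv K (N+1) ∅ := by
  show _ = (-1:ℤ)^(Finset.card ∅) * ∑ A ∈ (range K).powerset.filter (fun A => Comp A ∅),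
      Fv K N A
  rw [Finset.filter_true_of_mem (fun A _ => ⟨fun y hy => absurd hy (by simp),
    fun y _ => by simp⟩)]
  simp

lemma Fv_two_empty (K : ℕ) (hK : 1 ≤ K) : Fv K 2 ∅ = 0 := by
  rw [Fv_two]
  rw [if_neg]
  intro h
  rcases h 0 (by omega) with h | h <;> simp at h

lemma Fv_three_empty' (K : ℕ) (hK3 : K % 3 = 1) : Fv K 3 ∅ = -1 := by
  obtain ⟨j, rfl⟩ : ∃ j, K = 3*j+1 := ⟨K/3, by omega⟩
  rw [Fv_three_empty (3*j), pathZ_three j, pow_succ, pow_mul,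
    show ((-1:ℤ))^3 = -1 by norm_num]
  have h1 : ((-1:ℤ))^j * (-1)^j = 1 := by
    rw [← pow_add]; exact Even.neg_one_pow ⟨j, rfl⟩
  linear_combination -h1

lemma Fv_four_empty (K : ℕ) (hK3 : K % 3 = 1) : Fv K 4 ∅ = -1 := by
  rw [Fv_four K hK3 ∅ (by simp)]; simp


lemma mem_paralP {K N : ℕ} {p : ℤ × ℤ} :
    p ∈ paralP K N ↔ 0 ≤ p.2 ∧ p.2 ≤ (K:ℤ) - 1 ∧ 0 ≤ p.1 + p.2 ∧ p.1 + p.2 ≤ (N:ℤ) - 1 := by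
  unfold paralP
  simp only [mem_filter, Finset.mem_product, Finset.mem_Icc]
  constructor
  · rintro ⟨_, h⟩
    exact ⟨h.1, h.2.1, by linarith [h.2.2.1], by linarith [h.2.2.2]⟩
  · rintro ⟨h1, h2, h3, h4⟩
    refine ⟨⟨⟨by linarith, by linarith⟩, ⟨by linarith, by linarith⟩⟩,
      h1, h2, by linarith, by linarith⟩

lemma gridAdj_iff {p q : ℤ × ℤ} :
    GridAdj p q ↔ (p.1 = q.1 + 1 ∧ p.2 = q.2) ∨ (p.1 = q.1 - 1 ∧ p.2 = q.2) ∨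
      (p.1 = q.1 ∧ p.2 = q.2 + 1) ∨ (p.1 = q.1 ∧ p.2 = q.2 - 1) := by
  unfold GridAdj
  rcases abs_cases (p.1 - q.1) with ⟨h1, h1'⟩ | ⟨h1, h1'⟩ <;>
    rcases abs_cases (p.2 - q.2) with ⟨h2, h2'⟩ | ⟨h2, h2'⟩ <;>
    rw [h1, h2] <;> omega

/-- Column `u` of the parallelogram, indexed by a subset of `range K`. -/
def emb (u : ℕ) (B : Finset ℕ) : Finset (ℤ × ℤ) :=
  B.image (fun y : ℕ => ((u:ℤ) - (y:ℤ), (y:ℤ)))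

/-- The set of row-indices of the points of `I` lying in column `u`. -/
def colIdx (K u : ℕ) (I : Finset (ℤ × ℤ)) : Finset ℕ :=
  (range K).filter (fun y => ((u:ℤ) - (y:ℤ), (y:ℤ)) ∈ I)

/-- Independent subsets of the parallelogram. -/
noncomputable def ICfg (K N : ℕ) : Finset (Finset (ℤ × ℤ)) :=
  (paralP K N).powerset.filter (fun I => ∀ p ∈ I, ∀ q ∈ I, ¬ GridAdj p q)

/-- Signed count of independent sets whose last-column index set is `B`. -/
noncomputable def Gv (K N : ℕ) (B : Finset ℕ) : ℤ :=
  ∑ I ∈ (ICfg K N).filter (fun I => colIdx K (N-1) I = B), (-1) ^ I.card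

lemma altZ_eq_sum_Gv (K N : ℕ) :
    altZ (paralP K N) = ∑ B ∈ (range K).powerset, Gv K N B := by
  unfold altZ Gv ICfg
  exact (Finset.sum_fiberwise_of_maps_to
    (fun I _ => Finset.mem_powerset.mpr (Finset.filter_subset _ _)) _).symm

lemma emb_card (u : ℕ) (B : Finset ℕ) : (emb u B).card = B.card := by
  unfold emb
  rw [Finset.card_image_of_injective]
  intro a b h
  simpa using congrArg Prod.snd h

lemma mem_emb {u : ℕ} {B : Finset ℕ} {p : ℤ × ℤ} :
    p ∈ emb u B ↔ ∃ y ∈ B, p = ((u:ℤ) - (y:ℤ), (y:ℤ)) := by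
  unfold emb
  simp only [Finset.mem_image]
  constructor
  · rintro ⟨y, hy, rfl⟩; exact ⟨y, hy, rfl⟩
  · rintro ⟨y, hy, rfl⟩; exact ⟨y, hy, rfl⟩

lemma gridAdj_symm {p q : ℤ × ℤ} (h : GridAdj p q) : GridAdj q p := by
  unfold GridAdj at *
  rw [abs_sub_comm q.1 p.1, abs_sub_comm q.2 p.2]
  exact h

lemma no_adj_same_col {u : ℕ} {B : Finset ℕ} {p q : ℤ × ℤ}
    (hp : p ∈ emb u B) (hq : q ∈ emb u B) : ¬ GridAdj p q := by
  obtain ⟨a, _, rfl⟩ := mem_emb.mp hp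
  obtain ⟨b, _, rfl⟩ := mem_emb.mp hq
  rw [gridAdj_iff]
  push_neg
  simp only
  constructor
  · intro h1 h2; omega
  constructor
  · intro h1 h2; omega
  constructor
  · intro h1 h2; omega
  · intro h1 h2; omega

lemma Gv_one (K : ℕ) (hK : 1 ≤ K) (B : Finset ℕ) (hB : B ⊆ range K) :
    Gv K 1 B = (-1)^B.card := by
  unfold Gv
  have hfil : (ICfg K 1).filter (fun I => colIdx K (1-1) I = B) = {emb 0 B} := by
    ext I
    simp only [Finset.mem_singleton, mem_filter, ICfg, mem_powerset]
    constructor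
    · rintro ⟨⟨hsub, _⟩, hcol⟩
      ext p
      constructor
      · intro hp
        have hpp := mem_paralP.mp (hsub hp)
        obtain ⟨h1, h2, h3, h4⟩ := hpp
        have hy : ∃ y : ℕ, (y:ℤ) = p.2 ∧ y < K := ⟨p.2.toNat, by omega, by omega⟩
        obtain ⟨y, hy1, hy2⟩ := hy
        have hpe : p = ((0:ℤ) - (y:ℤ), (y:ℤ)) := by
          have : p.1 = -(y:ℤ) := by omega
          exact Prod.ext (by omega) (by omega)
        have : y ∈ colIdx K 0 I := by
          unfold colIdx
          simp only [mem_filter, mem_range]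
          exact ⟨hy2, by rw [show ((0:ℕ):ℤ) = (0:ℤ) from rfl, ← hpe]; exact hp⟩
        rw [hcol] at this
        rw [hpe]
        exact mem_emb.mpr ⟨y, this, by norm_num⟩
      · intro hp
        obtain ⟨y, hyB, rfl⟩ := mem_emb.mp hp
        have : y ∈ colIdx K 0 I := by rw [hcol]; exact hyB
        unfold colIdx at this
        simp only [mem_filter] at this
        convert this.2 using 2 <;> norm_num
    · rintro rfl
      refine ⟨⟨?_, fun p hp q hq => no_adj_same_col hp hq⟩, ?_⟩
      · intro p hp
        obtain ⟨y, hyB, rfl⟩ := mem_emb.mp hp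
        have := Finset.mem_range.mp (hB hyB)
        rw [mem_paralP]
        constructor
        · simp
        refine ⟨by simp; omega, ?_, ?_⟩ <;> simp <;> omega
      · ext y
        unfold colIdx
        simp only [mem_filter, mem_range]
        constructor
        · rintro ⟨hyK, hmem⟩
          obtain ⟨z, hzB, hz⟩ := mem_emb.mp hmem
          have : y = z := by
            have := congrArg Prod.snd hz
            simpa using this
          rwa [this]
        · intro hyB
          exact ⟨Finset.mem_range.mp (hB hyB), mem_emb.mpr ⟨y, hyB, by norm_num⟩⟩
  rw [hfil, Finset.sum_singleton, emb_card]

lemma paralP_mono (K N : ℕ) : paralP K N ⊆ paralP K (N+1) := by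
  intro p hp
  rw [mem_paralP] at hp ⊢
  push_cast at hp ⊢
  omega

lemma emb_subset_paralP (K N : ℕ) {B : Finset ℕ} (hB : B ⊆ range K) :
    emb N B ⊆ paralP K (N+1) := by
  intro p hp
  obtain ⟨y, hyB, rfl⟩ := mem_emb.mp hp
  have hy := Finset.mem_range.mp (hB hyB)
  rw [mem_paralP]
  push_cast
  refine ⟨by omega, by omega, by omega, by omega⟩

lemma emb_disj_paralP (K N : ℕ) {B : Finset ℕ} {p : ℤ × ℤ} (hp : p ∈ emb N B) :
    p ∉ paralP K N := by
  obtain ⟨y, _, rfl⟩ := mem_emb.mp hp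
  intro h
  rw [mem_paralP] at h
  push_cast at h
  omega

lemma decomp_lemma (K N : ℕ) {B : Finset ℕ} {I : Finset (ℤ × ℤ)}
    (hsub : I ⊆ paralP K (N+1)) (hcol : colIdx K N I = B) :
    I = (I ∩ paralP K N) ∪ emb N B := by
  ext p
  simp only [Finset.mem_union, Finset.mem_inter]
  constructor
  · intro hp
    have hpp := mem_paralP.mp (hsub hp)
    by_cases hc : p.1 + p.2 ≤ (N:ℤ) - 1
    · left
      exact ⟨hp, mem_paralP.mpr ⟨hpp.1, hpp.2.1, hpp.2.2.1, by push_cast; omega⟩⟩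
    · right
      have hsum : p.1 + p.2 = (N:ℤ) := by
        have := hpp.2.2.2; push_cast at this ⊢; omega
      have hy : ∃ y : ℕ, (y:ℤ) = p.2 ∧ y < K :=
        ⟨p.2.toNat, by omega, by have := hpp.2.1; omega⟩
      obtain ⟨y, hy1, hy2⟩ := hy
      have hpe : p = ((N:ℤ) - y, (y:ℤ)) := Prod.ext (by omega) (by omega)
      have : y ∈ colIdx K N I := by
        unfold colIdx
        simp only [mem_filter, mem_range]
        exact ⟨hy2, by rw [← hpe]; exact hp⟩
      rw [hcol] at this
      rw [hpe]
      exact mem_emb.mpr ⟨y, this, rfl⟩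
  · rintro (⟨hp, _⟩ | hp)
    · exact hp
    · obtain ⟨y, hyB, rfl⟩ := mem_emb.mp hp
      rw [← hcol] at hyB
      unfold colIdx at hyB
      simp only [mem_filter] at hyB
      exact hyB.2

set_option maxHeartbeats 2000000 in
lemma Gv_step (K N : ℕ) (hK : 1 ≤ K) (hN : 1 ≤ N) (B : Finset ℕ) (hB : B ⊆ range K) :
    Gv K (N+1) B = (-1)^B.card *
      ∑ A ∈ (range K).powerset.filter (fun A => Comp A B), Gv K N A := by
  have hNc : ((N - 1 : ℕ) : ℤ) = (N:ℤ) - 1 := by omega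
  -- the set of independent configurations in `paralP K N` compatible with `B` on top
  set t' : Finset (Finset (ℤ × ℤ)) :=
    (ICfg K N).filter (fun I' => Comp (colIdx K (N-1) I') B) with ht'
  -- Step 1: bijection `I ↦ I ∩ paralP K N`, inverse `I' ↦ I' ∪ emb N B`
  have step1 : Gv K (N+1) B = ∑ I' ∈ t', (-1:ℤ)^B.card * (-1)^I'.card := by
    unfold Gv
    refine Finset.sum_nbij' (fun I => I ∩ paralP K N) (fun I' => I' ∪ emb N B)
      ?_ ?_ ?_ ?_ ?_
    · -- forward membership
      intro I hI
      simp only [mem_filter, ICfg, mem_powerset] at hI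
      obtain ⟨⟨hsub, hind⟩, hcol⟩ := hI
      simp only [ht', mem_filter, ICfg, mem_powerset]
      have hmemN : ∀ y : ℕ, y ∈ B → ((N:ℤ) - y, (y:ℤ)) ∈ I := by
        intro y hy
        rw [← hcol] at hy
        unfold colIdx at hy
        simp only [mem_filter] at hy
        rw [show (N+1-1 : ℕ) = N from rfl] at hy
        exact hy.2
      refine ⟨⟨Finset.inter_subset_right, fun p hp q hq =>
        hind p (Finset.mem_of_mem_inter_left hp) q (Finset.mem_of_mem_inter_left hq)⟩,
        ?_, ?_⟩
      · -- Disjointness clause of Comp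
        intro y hyB hyA
        unfold colIdx at hyA
        simp only [mem_filter] at hyA
        have hq : (((N-1:ℕ):ℤ) - y, (y:ℤ)) ∈ I := Finset.mem_of_mem_inter_left hyA.2
        have hp : ((N:ℤ) - y, (y:ℤ)) ∈ I := hmemN y hyB
        refine hind _ hp _ hq ?_
        rw [gridAdj_iff]
        left
        constructor
        · simp only; omega
        · rfl
      · -- shift clause of Comp
        intro y hyA hy1B
        unfold colIdx at hyA
        simp only [mem_filter] at hyA
        have hq : (((N-1:ℕ):ℤ) - y, (y:ℤ)) ∈ I := Finset.mem_of_mem_inter_left hyA.2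
        have hp : ((N:ℤ) - (y+1:ℕ), ((y+1:ℕ):ℤ)) ∈ I := hmemN (y+1) hy1B
        refine hind _ hp _ hq ?_
        rw [gridAdj_iff]
        right; right; left
        constructor
        · simp only; push_cast; omega
        · simp only; push_cast; omega
    · -- backward membership
      intro I' hI'
      simp only [ht', mem_filter, ICfg, mem_powerset] at hI'
      obtain ⟨⟨hsub, hind⟩, hcomp1, hcomp2⟩ := hI'
      simp only [mem_filter, ICfg, mem_powerset]
      have hmix : ∀ p ∈ I', ∀ q ∈ emb N B, ¬ GridAdj p q := by
        intro p hp q hq hadj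
        obtain ⟨b, hbB, rfl⟩ := mem_emb.mp hq
        have hbK := Finset.mem_range.mp (hB hbB)
        have hpp := mem_paralP.mp (hsub hp)
        push_cast at hpp
        rw [gridAdj_iff] at hadj
        simp only at hadj
        rcases hadj with ⟨h1, h2⟩ | ⟨h1, h2⟩ | ⟨h1, h2⟩ | ⟨h1, h2⟩
        · omega
        · -- p = (N-1-b, b) : contradicts first Comp clause
          refine hcomp1 b hbB ?_
          unfold colIdx
          simp only [mem_filter, mem_range]
          refine ⟨hbK, ?_⟩
          have : p = (((N-1:ℕ):ℤ) - b, (b:ℤ)) := Prod.ext (by omega) (by omega)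
          rwa [← this]
        · omega
        · -- p = (N-b, b-1) : contradicts second Comp clause
          have hb1 : 1 ≤ b := by omega
          have ha : (b-1 : ℕ) + 1 = b := by omega
          refine hcomp2 (b-1) ?_ (by rwa [ha])
          unfold colIdx
          simp only [mem_filter, mem_range]
          refine ⟨by omega, ?_⟩
          have : p = (((N-1:ℕ):ℤ) - ((b-1:ℕ):ℤ), ((b-1:ℕ):ℤ)) := by
            refine Prod.ext ?_ ?_ <;> simp only <;> push_cast <;> omega
          rwa [← this]
      refine ⟨⟨?_, ?_⟩, ?_⟩
      · exact Finset.union_subset (hsub.trans (paralP_mono K N)) (emb_subset_paralP K N hB)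
      · intro p hp q hq
        rcases Finset.mem_union.mp hp with hp' | hp' <;>
          rcases Finset.mem_union.mp hq with hq' | hq'
        · exact hind p hp' q hq'
        · exact hmix p hp' q hq'
        · exact fun h => hmix q hq' p hp' (gridAdj_symm h)
        · exact no_adj_same_col hp' hq'
      · -- colIdx of the union is B
        ext y
        unfold colIdx
        rw [show (N+1-1 : ℕ) = N from rfl]
        simp only [mem_filter, mem_range]
        constructor
        · rintro ⟨hyK, hmem⟩
          rcases Finset.mem_union.mp hmem with h | h
          · exact absurd (mem_paralP.mp (hsub h)).2.2.2 (by push_cast; omega)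
          · obtain ⟨z, hzB, hz⟩ := mem_emb.mp h
            have : y = z := by have := congrArg Prod.snd hz; simpa using this
            rwa [this]
        · intro hyB
          exact ⟨Finset.mem_range.mp (hB hyB),
            Finset.mem_union_right _ (mem_emb.mpr ⟨y, hyB, rfl⟩)⟩
    · -- left inverse
      intro I hI
      simp only [mem_filter, ICfg, mem_powerset] at hI
      obtain ⟨⟨hsub, _⟩, hcol⟩ := hI
      exact (decomp_lemma K N hsub hcol).symm
    · -- right inverse
      intro I' hI'
      simp only [ht', mem_filter, ICfg, mem_powerset] at hI'
      obtain ⟨⟨hsub, _⟩, _⟩ := hI'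
      ext p
      simp only [Finset.mem_inter, Finset.mem_union]
      constructor
      · rintro ⟨hp | hp, hp2⟩
        · exact hp
        · exact absurd hp2 (emb_disj_paralP K N hp)
      · intro hp
        exact ⟨Or.inl hp, hsub hp⟩
    · -- cardinalities / signs
      intro I hI
      simp only [mem_filter, ICfg, mem_powerset] at hI
      obtain ⟨⟨hsub, _⟩, hcol⟩ := hI
      have hdecomp : I = (I ∩ paralP K N) ∪ emb N B := decomp_lemma K N hsub hcol
      have hdisj : Disjoint (I ∩ paralP K N) (emb N B) := by
        rw [Finset.disjoint_right]
        intro p hp hp2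
        exact absurd (Finset.mem_of_mem_inter_right hp2) (emb_disj_paralP K N hp)
      have hcard : I.card = (I ∩ paralP K N).card + B.card := by
        conv_lhs => rw [hdecomp]
        rw [Finset.card_union_of_disjoint hdisj, emb_card]
      rw [hcard, pow_add]
      ring
  rw [step1, ← Finset.mul_sum]
  congr 1
  -- Step 2: fiberwise decomposition of the sum over t' by colIdx
  have hmaps : ∀ I' ∈ t', colIdx K (N-1) I' ∈
      (range K).powerset.filter (fun A => Comp A B) := by
    intro I' hI'
    rw [ht', mem_filter] at hI'
    simp only [mem_filter, mem_powerset]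
    exact ⟨Finset.filter_subset _ _, hI'.2⟩
  rw [← Finset.sum_fiberwise_of_maps_to hmaps (fun I' => (-1:ℤ)^I'.card)]
  refine Finset.sum_congr rfl (fun A hA => ?_)
  simp only [mem_filter, mem_powerset] at hA
  unfold Gv
  apply Finset.sum_congr _ (fun _ _ => rfl)
  rw [ht', Finset.filter_filter]
  apply Finset.filter_congr
  intro I' hI'
  constructor
  · rintro ⟨_, h⟩; exact h
  · intro h; exact ⟨by rw [h]; exact hA.2, h⟩

lemma Gv_eq_Fv (K : ℕ) (hK : 1 ≤ K) :
    ∀ N, 1 ≤ N → ∀ B ∈ (range K).powerset, Gv K N B = Fv K N B := by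
  intro N
  induction N with
  | zero => omega
  | succ N ih =>
    intro _ B hB
    rcases Nat.eq_zero_or_pos N with rfl | hN
    · rw [Gv_one K hK B (Finset.mem_powerset.mp hB), Fv_one]
    · rw [Gv_step K N hK hN B (Finset.mem_powerset.mp hB)]
      show _ = (-1:ℤ)^B.card * ∑ A ∈ (range K).powerset.filter (fun A => Comp A B), Fv K N A
      congr 1
      refine Finset.sum_congr rfl (fun A hA => ?_)
      exact ih hN A (Finset.mem_powerset.mpr
        (Finset.mem_powerset.mp (Finset.mem_filter.mp hA).1))

lemma altZ_eq_Fv (K N : ℕ) (hK : 1 ≤ K) (hN : 1 ≤ N) :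
    altZ (paralP K N) = Fv K (N+1) ∅ := by
  rw [altZ_eq_sum_Gv, ← sum_Fv_eq]
  exact Finset.sum_congr rfl (fun B hB => Gv_eq_Fv K hK N hN B hB)

/-- For `K ≡ 1 (mod 3)`: if `N ≡ 1 (mod 3)` then `Z_𝓟(K,N) = 0`, and otherwise
`Z_𝓟(K,N) = (-1)^n` with `n = ⌈N/3⌉ = (N+2)/3`. -/
theorem altZ_paralP_K1 (K N : ℕ) (hK : 1 ≤ K) (hN : 1 ≤ N) (hK3 : K % 3 = 1) :
    (N % 3 = 1 → altZ (paralP K N) = 0) ∧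
    (N % 3 ≠ 1 → altZ (paralP K N) = (-1) ^ ((N + 2) / 3)) := by
  have hper : ∀ M, 1 ≤ M → altZ (paralP K (M+3)) = -altZ (paralP K M) := by
    intro M hM
    rw [altZ_eq_Fv K (M+3) hK (by omega), altZ_eq_Fv K M hK hM,
      show M + 3 + 1 = (M+1) + 3 from by omega]
    exact Fv_period K hK3 (M+1) (by omega) ∅ (by simp)
  have h1 : altZ (paralP K 1) = 0 := by
    rw [altZ_eq_Fv K 1 hK (by omega)]
    exact Fv_two_empty K hK
  have h2 : altZ (paralP K 2) = -1 := by
    rw [altZ_eq_Fv K 2 hK (by omega)]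
    exact Fv_three_empty' K hK3
  have h3 : altZ (paralP K 3) = -1 := by
    rw [altZ_eq_Fv K 3 hK (by omega)]
    exact Fv_four_empty K hK3
  clear hK3
  induction N using Nat.strong_induction_on with
  | _ N ihN =>
    rcases Nat.lt_or_ge N 4 with h4 | h4
    · interval_cases N
      · exact ⟨fun _ => h1, fun h => absurd rfl h⟩
      · exact ⟨fun h => by omega, fun _ => by rw [h2]; norm_num⟩
      · exact ⟨fun h => by omega, fun _ => by rw [h3]; norm_num⟩
    · obtain ⟨M, rfl⟩ : ∃ M, N = M + 3 := ⟨N - 3, by omega⟩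
      have hM : 1 ≤ M := by omega
      obtain ⟨ih0, ih1⟩ := ihN M (by omega) hM
      constructor
      · intro h
        rw [hper M hM, ih0 (by omega)]
        ring
      · intro h
        rw [hper M hM, ih1 (by omega)]
        have hd : (M + 3 + 2) / 3 = (M + 2) / 3 + 1 := by omega
        rw [hd, pow_succ]
        ring
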